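/- arXiv:2305.06884 — 2 statements merged into one kernel-verified Lean document; each statement's English description precedes it below -/
import Mathlib

section
/- (Proposition C.2.) Define ψ_E^c(λ) = (−log(1 − cλ) − cλ)/c² for c > 0, let m̂_i = (π(I_i)/q_i(I_i)) f(I_i) + Σ_{j=1}^{i−1} π(I_j) f(I_j), μ̂_t = (Σ_{i=1}^t m̂_i)/t (with μ̂_0 a fixed positive constant), and let (λ_t), (c_t) be predictable with c_t ≥ μ̂_{t−1} > 0 and λ_t ∈ [0, 1/c_t). Then the empirical-Bernstein process M_t^{EB}(m*) = exp(Σ_{i=1}^t λ_i(Z_i − μ_i(m*)) − (Z_i − μ̂_{i−1})² ψ_E^{c_i}(λ_i)) is a nonnegative supermartingale; moreover, the mirrored process M'_t^{EB}(m*), defined identically but with f replaced by 1−f (so Z̃_t = (π(I_t)/q_t(I_t))(1 − f(I_t)), the target 1 − m*, and the analogous running mean μ̃_{t−1}), is also a nonnegative supermartingale. -/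
open MeasureTheory Finset

namespace RLFA

variable {Ω : Type*}

/-- `remaining I t ω` is the set `N_t = {1,…,N} \ {I_1, …, I_{t-1}}` of indices not yet
sampled before time `t`. -/
def remaining {N : ℕ} (I : ℕ → Ω → Fin N) (t : ℕ) (ω : Ω) : Finset (Fin N) :=
  Finset.univ \ (Finset.Icc 1 (t - 1)).image fun j => I j ω

/-- The filtration `F_t = σ(I_1, …, I_t)`. -/
def filt {N : ℕ} (I : ℕ → Ω → Fin N) (t : ℕ) : MeasurableSpace Ω :=
  ⨆ j ∈ Finset.Icc 1 t, MeasurableSpace.comap (I j) ⊤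

/-- The importance-weighted observation `Z_t = f(I_t) · π(I_t) / q_t(I_t)`. -/
noncomputable def Zt {N : ℕ} (π f : Fin N → ℝ) (q : ℕ → Ω → Fin N → ℝ)
    (I : ℕ → Ω → Fin N) (t : ℕ) (ω : Ω) : ℝ :=
  f (I t ω) * (π (I t ω) / q t ω (I t ω))

/-- `μ_t(m) = m − Σ_{j=1}^{t−1} π(I_j) f(I_j)`. -/
def muT {N : ℕ} (π f : Fin N → ℝ) (I : ℕ → Ω → Fin N) (m : ℝ) (t : ℕ) (ω : Ω) : ℝ :=
  m - ∑ j ∈ Finset.Icc 1 (t - 1), π (I j ω) * f (I j ω)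

/-- The empirical-Bernstein CGF-like function `ψ_E^c(λ) = (−log(1 − cλ) − cλ)/c²`. -/
noncomputable def psiE (c lam : ℝ) : ℝ :=
  (-Real.log (1 - c * lam) - c * lam) / c ^ 2

/-- `m̂_i = (π(I_i)/q_i(I_i)) f(I_i) + Σ_{j=1}^{i−1} π(I_j) f(I_j)`. -/
noncomputable def mhat {N : ℕ} (π f : Fin N → ℝ) (q : ℕ → Ω → Fin N → ℝ)
    (I : ℕ → Ω → Fin N) (t : ℕ) (ω : Ω) : ℝ :=
  π (I t ω) / q t ω (I t ω) * f (I t ω) +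
    ∑ j ∈ Finset.Icc 1 (t - 1), π (I j ω) * f (I j ω)

/-- The running mean `μ̂_t = (Σ_{i=1}^t m̂_i)/t`, with `μ̂_0` a fixed constant `μ0`. -/
noncomputable def muhatP {N : ℕ} (μ0 : ℝ) (π f : Fin N → ℝ) (q : ℕ → Ω → Fin N → ℝ)
    (I : ℕ → Ω → Fin N) (t : ℕ) (ω : Ω) : ℝ :=
  if t = 0 then μ0 else (∑ i ∈ Finset.Icc 1 t, mhat π f q I i ω) / t

/-- The empirical-Bernstein process
`M_t^{EB}(m) = exp(Σ_{i=1}^t λ_i(Z_i − μ_i(m)) − (Z_i − μ̂_{i−1})² ψ_E^{c_i}(λ_i))`. -/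
noncomputable def ebM {N : ℕ} (μ0 : ℝ) (π f : Fin N → ℝ) (q : ℕ → Ω → Fin N → ℝ)
    (I : ℕ → Ω → Fin N) (lam c : ℕ → Ω → ℝ) (m : ℝ) (t : ℕ) (ω : Ω) : ℝ :=
  Real.exp (∑ i ∈ Finset.Icc 1 t,
    (lam i ω * (Zt π f q I i ω - muT π f I m i ω) -
      (Zt π f q I i ω - muhatP μ0 π f q I (i - 1) ω) ^ 2 * psiE (c i ω) (lam i ω)))

/-!
Given `F_{t-1}`, the observation `Z_t` has mean `μ_t(m*)`: sampling is without replacement, so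
the indices still available carry exactly the mass `m*` minus what has been seen. Moreover
`Z_t ≥ 0` and `0 < μ̂_{t-1} ≤ c_t`, so `x = Z_t - μ̂_{t-1} ≥ -c_t`. Fan's inequality
`exp(λx - x² ψ_E^c(λ)) ≤ 1 + λx` for `x ≥ -c`, `0 ≤ cλ < 1`, which holds because
`(v - log(1 + v)) / v² = ∫₀¹ s / (1 + sv) ds` is decreasing, then bounds the conditional mean of
the multiplicative increment by `(1 + λ(μ_t - μ̂_{t-1})) exp(λ(μ̂_{t-1} - μ_t)) ≤ 1`.
The mirrored process is the same process for `1 - f`, whose total is `1 - m*`.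
-/

section Fan

open intervalIntegral

noncomputable def logRemainderCoeff (v : ℝ) : ℝ :=
  ∫ s in (0 : ℝ)..1, s / (1 + s * v)

lemma one_add_mul_pos {s v : ℝ} (hs : s ∈ Set.uIcc (0 : ℝ) 1) (hv : -1 < v) :
    0 < 1 + s * v := by
  rw [Set.uIcc_of_le zero_le_one] at hs
  rcases le_or_gt 0 v with h | h
  · nlinarith [hs.1]
  · nlinarith [hs.2]

lemma sub_log_one_add_eq {v : ℝ} (hv : -1 < v) :
    v - Real.log (1 + v) = v ^ 2 * logRemainderCoeff v := by
  have hderiv : ∀ s ∈ Set.uIcc (0 : ℝ) 1,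
      HasDerivAt (fun s => s * v - Real.log (1 + s * v)) (v ^ 2 * (s / (1 + s * v))) s := by
    intro s hs
    have hpos := one_add_mul_pos hs hv
    have hlin : HasDerivAt (fun s : ℝ => s * v) v s := by
      simpa using (hasDerivAt_id s).mul_const v
    refine (hlin.sub ((hlin.const_add 1).log hpos.ne')).congr_deriv ?_
    rw [mul_div_assoc', eq_div_iff hpos.ne', sub_mul, div_mul_cancel₀ _ hpos.ne']
    ring
  have hcont : ContinuousOn (fun s => v ^ 2 * (s / (1 + s * v))) (Set.uIcc 0 1) :=
    continuousOn_const.mul <| continuousOn_id.div (by fun_prop)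
      fun s hs => (one_add_mul_pos hs hv).ne'
  rw [logRemainderCoeff, ← intervalIntegral.integral_const_mul,
    integral_eq_sub_of_hasDerivAt hderiv hcont.intervalIntegrable]
  simp

lemma logRemainderCoeff_le {v w : ℝ} (hw : -1 < w) (hwv : w ≤ v) :
    logRemainderCoeff v ≤ logRemainderCoeff w := by
  have hv : -1 < v := hw.trans_le hwv
  have hint : ∀ u, -1 < u → IntervalIntegrable (fun s => s / (1 + s * u)) volume 0 1 :=
    fun u hu => (continuousOn_id.div (by fun_prop)
      fun s hs => (one_add_mul_pos hs hu).ne').intervalIntegrable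
  refine integral_mono_on zero_le_one (hint v hv) (hint w hw) fun s hs => ?_
  have hs' : s ∈ Set.uIcc (0 : ℝ) 1 := by rwa [Set.uIcc_of_le zero_le_one]
  exact div_le_div_of_nonneg_left hs.1 (one_add_mul_pos hs' hw) (by nlinarith [hs.1])

lemma psiE_eq {c l : ℝ} (hc : c ≠ 0) (hcl : c * l < 1) :
    psiE c l = l ^ 2 * logRemainderCoeff (-(c * l)) := by
  have h := sub_log_one_add_eq (v := -(c * l)) (by linarith)
  rw [← sub_eq_add_neg] at h
  rw [psiE, div_eq_iff (pow_ne_zero 2 hc)]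
  linear_combination h

lemma exp_mul_sub_sq_mul_psiE_le {c l x : ℝ} (hc : 0 < c) (hl : 0 ≤ l) (hcl : c * l < 1)
    (hx : -c ≤ x) : Real.exp (l * x - x ^ 2 * psiE c l) ≤ 1 + l * x := by
  have hlx : -(c * l) ≤ l * x := by nlinarith
  have hlx' : -1 < l * x := by linarith
  have hlog : l * x - x ^ 2 * psiE c l ≤ Real.log (1 + l * x) := by
    have hmono : (l * x) ^ 2 * logRemainderCoeff (l * x)
        ≤ (l * x) ^ 2 * logRemainderCoeff (-(c * l)) :=
      mul_le_mul_of_nonneg_left (logRemainderCoeff_le (by linarith) hlx) (sq_nonneg _)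
    have := sub_log_one_add_eq hlx'
    rw [psiE_eq hc.ne' hcl]
    linarith
  calc Real.exp (l * x - x ^ 2 * psiE c l) ≤ Real.exp (Real.log (1 + l * x)) :=
        Real.exp_le_exp.2 hlog
    _ = 1 + l * x := Real.exp_log (by linarith)

end Fan

lemma sum_mul_exp_le_one {ι : Type*} (R : Finset ι) (p Z : ι → ℝ) {a c l m : ℝ}
    (hp : ∀ i ∈ R, 0 ≤ p i) (hp_sum : ∑ i ∈ R, p i = 1) (hmean : ∑ i ∈ R, p i * Z i = m)
    (hc : 0 < c) (hZ : ∀ i ∈ R, -c ≤ Z i - a) (hl : 0 ≤ l) (hcl : c * l < 1) :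
    ∑ i ∈ R, p i * Real.exp (l * (Z i - m) - (Z i - a) ^ 2 * psiE c l) ≤ 1 := by
  have hterm : ∀ i ∈ R, p i * Real.exp (l * (Z i - m) - (Z i - a) ^ 2 * psiE c l)
      ≤ p i * ((1 + l * (Z i - a)) * Real.exp (l * (a - m))) := by
    intro i hi
    rw [show l * (Z i - m) - (Z i - a) ^ 2 * psiE c l
        = (l * (Z i - a) - (Z i - a) ^ 2 * psiE c l) + l * (a - m) by ring, Real.exp_add]
    gcongr
    · exact hp i hi
    · exact exp_mul_sub_sq_mul_psiE_le hc hl hcl (hZ i hi)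
  have hlinear : ∑ i ∈ R, p i * (1 + l * (Z i - a)) = 1 + l * (m - a) := by
    simp only [mul_add, mul_one, mul_sub, mul_left_comm (p _) l, sum_add_distrib,
      sum_sub_distrib, ← mul_sum, ← sum_mul, hp_sum, hmean]
    ring
  calc ∑ i ∈ R, p i * Real.exp (l * (Z i - m) - (Z i - a) ^ 2 * psiE c l)
      ≤ ∑ i ∈ R, p i * ((1 + l * (Z i - a)) * Real.exp (l * (a - m))) := sum_le_sum hterm
    _ = (1 + l * (m - a)) * Real.exp (l * (a - m)) := by
        simp only [← mul_assoc, ← sum_mul, hlinear]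
    _ ≤ Real.exp (l * (m - a)) * Real.exp (l * (a - m)) := by
        gcongr
        linarith [Real.add_one_le_exp (l * (m - a))]
    _ = 1 := by
        rw [← Real.exp_add, ← Real.exp_zero]
        ring_nf

section Sampling

variable {N : ℕ} {I : ℕ → Ω → Fin N}

lemma filt_mono : Monotone (filt I) :=
  fun _ _ hst => iSup₂_le fun j hj => le_iSup₂_of_le (f := fun j (_ : j ∈ Icc 1 _) =>
    MeasurableSpace.comap (I j) ⊤) j (mem_Icc.2 ⟨(mem_Icc.1 hj).1, (mem_Icc.1 hj).2.trans hst⟩)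
    le_rfl

lemma measurable_filt {j t : ℕ} (h1 : 1 ≤ j) (h2 : j ≤ t) : Measurable[filt I t] (I j) :=
  measurable_iff_comap_le.2 <| le_iSup₂ (f := fun j (_ : j ∈ Icc 1 t) =>
    MeasurableSpace.comap (I j) ⊤) j (mem_Icc.2 ⟨h1, h2⟩)

lemma measurable_apply_index {m : MeasurableSpace Ω} {G : Ω → Fin N → ℝ}
    (hG : ∀ k, Measurable fun ω => G ω k) {T : Ω → Fin N} (hT : Measurable T) :
    Measurable fun ω => G ω (T ω) :=
  (measurable_from_prod_countable_left (f := fun p : Ω × Fin N => G p.1 p.2) hG).comp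
    (measurable_id.prodMk hT)

lemma injOn_Icc_of_mem_remaining {ω : Ω} {n : ℕ}
    (hWoR : ∀ j, 1 ≤ j → j ≤ n → I j ω ∈ remaining I j ω) :
    Set.InjOn (fun j => I j ω) (Icc 1 n) := by
  have hne : ∀ a b, a ∈ Icc 1 n → b ∈ Icc 1 n → a < b → I a ω ≠ I b ω := by
    intro a b ha hb hab heq
    obtain ⟨ha1, -⟩ := mem_Icc.1 ha
    obtain ⟨hb1, hbn⟩ := mem_Icc.1 hb
    have hb := hWoR b hb1 hbn
    rw [remaining, mem_sdiff] at hb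
    exact hb.2 (mem_image.2 ⟨a, mem_Icc.2 ⟨ha1, by omega⟩, heq⟩)
  intro a ha b hb heq
  by_contra hab
  rcases Nat.lt_or_gt_of_ne hab with h | h
  · exact hne a b ha hb h heq
  · exact hne b a hb ha h heq.symm

lemma sum_remaining_eq {ω : Ω} {t : ℕ}
    (hWoR : ∀ j, 1 ≤ j → j ≤ t - 1 → I j ω ∈ remaining I j ω) (g : Fin N → ℝ) :
    ∑ k ∈ remaining I t ω, g k = ∑ k, g k - ∑ j ∈ Icc 1 (t - 1), g (I j ω) := by
  rw [remaining, sum_sdiff_eq_sub (subset_univ _), sum_image (injOn_Icc_of_mem_remaining hWoR)]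

end Sampling

section Supermartingale

variable {N : ℕ} {π f : Fin N → ℝ} {q : ℕ → Ω → Fin N → ℝ} {I : ℕ → Ω → Fin N}
  {lam c : ℕ → Ω → ℝ} {μ0 m : ℝ}

/-- The `t`-th summand of the exponent of `ebM`, with the sampled index `I t ω` replaced by `k`. -/
noncomputable def ebIncrement (μ0 : ℝ) (π f : Fin N → ℝ) (q : ℕ → Ω → Fin N → ℝ)
    (I : ℕ → Ω → Fin N) (lam c : ℕ → Ω → ℝ) (m : ℝ) (t : ℕ) (ω : Ω) (k : Fin N) : ℝ :=
  lam t ω * (f k * (π k / q t ω k) - muT π f I m t ω) -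
    (f k * (π k / q t ω k) - muhatP μ0 π f q I (t - 1) ω) ^ 2 * psiE (c t ω) (lam t ω)

lemma ebM_eq (t : ℕ) (ω : Ω) : ebM μ0 π f q I lam c m t ω =
    Real.exp (∑ i ∈ Icc 1 t, ebIncrement μ0 π f q I lam c m i ω (I i ω)) :=
  rfl

lemma ebM_succ (t : ℕ) (ω : Ω) : ebM μ0 π f q I lam c m (t + 1) ω =
    ebM μ0 π f q I lam c m t ω *
      Real.exp (ebIncrement μ0 π f q I lam c m (t + 1) ω (I (t + 1) ω)) := by
  rw [ebM_eq, ebM_eq, sum_Icc_succ_top (by omega), Real.exp_add]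

lemma measurable_psiE {mΩ : MeasurableSpace Ω} {c l : Ω → ℝ} (hc : Measurable c)
    (hl : Measurable l) : Measurable fun ω => psiE (c ω) (l ω) :=
  (((measurable_const.sub (hc.mul hl)).log).neg.sub (hc.mul hl)).div (hc.pow_const 2)

lemma measurable_sum_past {s t : ℕ} (hst : s ≤ t) (g : Fin N → ℝ) :
    Measurable[filt I t] fun ω => ∑ j ∈ Icc 1 s, g (I j ω) :=
  Finset.measurable_sum _ fun _ hj =>
    (measurable_of_finite g).comp (measurable_filt (mem_Icc.1 hj).1 ((mem_Icc.1 hj).2.trans hst))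

lemma measurable_muhatP
    (hq_meas : ∀ t, 1 ≤ t → t ≤ N → ∀ i, StronglyMeasurable[filt I (t - 1)] fun ω => q t ω i)
    {s : ℕ} (hs : s ≤ N) : Measurable[filt I s] (muhatP μ0 π f q I s) := by
  unfold muhatP
  split_ifs
  · exact measurable_const
  refine (Finset.measurable_sum _ fun i hi => ?_).div_const _
  obtain ⟨hi1, his⟩ := mem_Icc.1 hi
  refine Measurable.add ?_ (measurable_sum_past (by omega) fun k => π k * f k)
  have hq k : Measurable[filt I s] fun ω => q i ω k :=
    (hq_meas i hi1 (his.trans hs) k).measurable.mono (filt_mono (by omega)) le_rfl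
  exact measurable_apply_index (G := fun ω k => π k / q i ω k * f k)
    (fun k => ((hq k).const_div _).mul_const _) (measurable_filt hi1 his)

lemma measurable_ebIncrement
    (hq_meas : ∀ t, 1 ≤ t → t ≤ N → ∀ i, StronglyMeasurable[filt I (t - 1)] fun ω => q t ω i)
    (hlam_meas : ∀ t, 1 ≤ t → t ≤ N → StronglyMeasurable[filt I (t - 1)] (lam t))
    (hc_meas : ∀ t, 1 ≤ t → t ≤ N → StronglyMeasurable[filt I (t - 1)] (c t))
    {t : ℕ} (h1 : 1 ≤ t) (h2 : t ≤ N) (k : Fin N) :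
    Measurable[filt I (t - 1)] fun ω => ebIncrement μ0 π f q I lam c m t ω k := by
  have hl := (hlam_meas t h1 h2).measurable
  have hZ : Measurable[filt I (t - 1)] fun ω => f k * (π k / q t ω k) :=
    ((hq_meas t h1 h2 k).measurable.const_div _).const_mul _
  have hmuT : Measurable[filt I (t - 1)] (muT π f I m t) :=
    measurable_const.sub (measurable_sum_past le_rfl fun k => π k * f k)
  have hmuhat : Measurable[filt I (t - 1)] (muhatP μ0 π f q I (t - 1)) :=
    measurable_muhatP hq_meas (by omega)
  exact (hl.mul (hZ.sub hmuT)).sub (((hZ.sub hmuhat).pow_const 2).mul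
    (measurable_psiE (hc_meas t h1 h2).measurable hl))

lemma measurable_ebM
    (hq_meas : ∀ t, 1 ≤ t → t ≤ N → ∀ i, StronglyMeasurable[filt I (t - 1)] fun ω => q t ω i)
    (hlam_meas : ∀ t, 1 ≤ t → t ≤ N → StronglyMeasurable[filt I (t - 1)] (lam t))
    (hc_meas : ∀ t, 1 ≤ t → t ≤ N → StronglyMeasurable[filt I (t - 1)] (c t))
    {t : ℕ} (ht : t ≤ N) : Measurable[filt I t] (ebM μ0 π f q I lam c m t) := by
  refine Measurable.exp (Finset.measurable_sum _ fun i hi => ?_)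
  obtain ⟨hi1, hit⟩ := mem_Icc.1 hi
  exact measurable_apply_index (fun k => (measurable_ebIncrement hq_meas hlam_meas hc_meas hi1
    (hit.trans ht) k).mono (filt_mono (by omega)) le_rfl) (measurable_filt hi1 hit)

lemma sum_remaining_mul_exp_ebIncrement_le_one (hπ : ∀ k, 0 ≤ π k) (hf : ∀ k, 0 ≤ f k)
    (hm : m = ∑ k, π k * f k) {t : ℕ} {ω : Ω}
    (hq_pos : ∀ k ∈ remaining I t ω, 0 < q t ω k) (hq_sum : ∑ k ∈ remaining I t ω, q t ω k = 1)
    (hWoR : ∀ j, 1 ≤ j → j ≤ t - 1 → I j ω ∈ remaining I j ω)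
    (hc : 0 < muhatP μ0 π f q I (t - 1) ω ∧ muhatP μ0 π f q I (t - 1) ω ≤ c t ω)
    (hlam : 0 ≤ lam t ω ∧ lam t ω < 1 / c t ω) :
    ∑ k ∈ remaining I t ω, q t ω k * Real.exp (ebIncrement μ0 π f q I lam c m t ω k) ≤ 1 := by
  have hc_pos : 0 < c t ω := hc.1.trans_le hc.2
  have hmean : ∑ k ∈ remaining I t ω, q t ω k * (f k * (π k / q t ω k)) = muT π f I m t ω := by
    have hterm : ∀ k ∈ remaining I t ω, q t ω k * (f k * (π k / q t ω k)) = π k * f k :=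
      fun k hk => by rw [mul_left_comm, mul_div_cancel₀ _ (hq_pos k hk).ne', mul_comm]
    rw [sum_congr rfl hterm, sum_remaining_eq hWoR, muT, hm]
  refine sum_mul_exp_le_one _ _ _ (fun k hk => (hq_pos k hk).le) hq_sum hmean hc_pos
    (fun k hk => ?_) hlam.1 ((lt_div_iff₀' hc_pos).1 hlam.2)
  have : 0 ≤ f k * (π k / q t ω k) := mul_nonneg (hf k) (div_nonneg (hπ k) (hq_pos k hk).le)
  linarith [hc.2]

lemma condExp_ebM_le [MeasurableSpace Ω] (μ : Measure Ω)
    (hπ : ∀ k, 0 ≤ π k) (hf : ∀ k, 0 ≤ f k) (hm : m = ∑ k, π k * f k)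
    (hq_meas : ∀ t, 1 ≤ t → t ≤ N → ∀ i, StronglyMeasurable[filt I (t - 1)] fun ω => q t ω i)
    (hq_pos : ∀ t ω, 1 ≤ t → t ≤ N → ∀ i ∈ remaining I t ω, 0 < q t ω i)
    (hq_sum : ∀ t ω, 1 ≤ t → t ≤ N → ∑ i ∈ remaining I t ω, q t ω i = 1)
    (hWoR : ∀ t ω, 1 ≤ t → t ≤ N → I t ω ∈ remaining I t ω)
    (hcond : ∀ t, 1 ≤ t → t ≤ N → ∀ G : Ω → Fin N → ℝ,
      (∀ i, StronglyMeasurable[filt I (t - 1)] fun ω => G ω i) →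
      μ[(fun ω => G ω (I t ω)) | filt I (t - 1)]
        =ᵐ[μ] fun ω => ∑ i ∈ remaining I t ω, q t ω i * G ω i)
    (hlam_meas : ∀ t, 1 ≤ t → t ≤ N → StronglyMeasurable[filt I (t - 1)] (lam t))
    (hc_meas : ∀ t, 1 ≤ t → t ≤ N → StronglyMeasurable[filt I (t - 1)] (c t))
    (hc : ∀ t, 1 ≤ t → t ≤ N → ∀ᵐ ω ∂μ,
      0 < muhatP μ0 π f q I (t - 1) ω ∧ muhatP μ0 π f q I (t - 1) ω ≤ c t ω)
    (hlam : ∀ t, 1 ≤ t → t ≤ N → ∀ᵐ ω ∂μ, 0 ≤ lam t ω ∧ lam t ω < 1 / c t ω)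
    {t : ℕ} (h1 : 1 ≤ t) (h2 : t ≤ N) :
    μ[ebM μ0 π f q I lam c m t | filt I (t - 1)] ≤ᵐ[μ] ebM μ0 π f q I lam c m (t - 1) := by
  obtain ⟨s, rfl⟩ : ∃ s, t = s + 1 := ⟨t - 1, by omega⟩
  let G : Ω → Fin N → ℝ := fun ω k => ebM μ0 π f q I lam c m s ω *
    Real.exp (ebIncrement μ0 π f q I lam c m (s + 1) ω k)
  have hG : ∀ k, StronglyMeasurable[filt I (s + 1 - 1)] fun ω => G ω k := fun k =>
    ((measurable_ebM hq_meas hlam_meas hc_meas (by omega)).mul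
      (measurable_ebIncrement hq_meas hlam_meas hc_meas h1 h2 k).exp).stronglyMeasurable
  have hGI : (fun ω => G ω (I (s + 1) ω)) = ebM μ0 π f q I lam c m (s + 1) :=
    funext fun ω => (ebM_succ s ω).symm
  have hce := hcond (s + 1) h1 h2 G hG
  rw [hGI] at hce
  filter_upwards [hce, hc (s + 1) h1 h2, hlam (s + 1) h1 h2] with ω hω hcω hlamω
  rw [hω]
  calc ∑ k ∈ remaining I (s + 1) ω, q (s + 1) ω k * G ω k
      = ebM μ0 π f q I lam c m s ω * ∑ k ∈ remaining I (s + 1) ω,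
          q (s + 1) ω k * Real.exp (ebIncrement μ0 π f q I lam c m (s + 1) ω k) := by
        rw [mul_sum]
        exact sum_congr rfl fun k _ => mul_left_comm _ _ _
    _ ≤ ebM μ0 π f q I lam c m s ω * 1 := by
        refine mul_le_mul_of_nonneg_left ?_ (Real.exp_pos _).le
        exact sum_remaining_mul_exp_ebIncrement_le_one hπ hf hm (hq_pos _ ω h1 h2)
          (hq_sum _ ω h1 h2) (fun j hj1 hj2 => hWoR j ω hj1 (by omega)) hcω hlamω
    _ = ebM μ0 π f q I lam c m s ω := mul_one _

end Supermartingale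

theorem statement15_general
    [m0 : MeasurableSpace Ω] (μ : Measure Ω)
    {N : ℕ}
    (π f : Fin N → ℝ)
    (hπ : ∀ i, π i ∈ Set.Ioc (0 : ℝ) 1) (hπsum : ∑ i, π i = 1)
    (hf : ∀ i, f i ∈ Set.Icc (0 : ℝ) 1)
    (I : ℕ → Ω → Fin N)
    (q : ℕ → Ω → Fin N → ℝ)
    (hq_meas : ∀ t, 1 ≤ t → t ≤ N → ∀ i,
      StronglyMeasurable[filt I (t - 1)] fun ω => q t ω i)
    (hq_pos : ∀ t ω, 1 ≤ t → t ≤ N → ∀ i ∈ remaining I t ω, 0 < q t ω i)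
    (hq_sum : ∀ t ω, 1 ≤ t → t ≤ N → ∑ i ∈ remaining I t ω, q t ω i = 1)
    (hWoR : ∀ t ω, 1 ≤ t → t ≤ N → I t ω ∈ remaining I t ω)
    (hcond : ∀ t, 1 ≤ t → t ≤ N → ∀ G : Ω → Fin N → ℝ,
      (∀ i, StronglyMeasurable[filt I (t - 1)] fun ω => G ω i) →
      μ[(fun ω => G ω (I t ω)) | filt I (t - 1)]
        =ᵐ[μ] fun ω => ∑ i ∈ remaining I t ω, q t ω i * G ω i)
    (mstar : ℝ) (hmstar : mstar = ∑ i, π i * f i)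
    -- the lower process
    (μ0 : ℝ)
    (lam c : ℕ → Ω → ℝ)
    (hlam_meas : ∀ t, 1 ≤ t → t ≤ N → StronglyMeasurable[filt I (t - 1)] (lam t))
    (hc_meas : ∀ t, 1 ≤ t → t ≤ N → StronglyMeasurable[filt I (t - 1)] (c t))
    (hc : ∀ t, 1 ≤ t → t ≤ N → ∀ᵐ ω ∂μ,
      0 < muhatP μ0 π f q I (t - 1) ω ∧ muhatP μ0 π f q I (t - 1) ω ≤ c t ω)
    (hlam : ∀ t, 1 ≤ t → t ≤ N → ∀ᵐ ω ∂μ, 0 ≤ lam t ω ∧ lam t ω < 1 / c t ω)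
    -- the mirrored process (with `f` replaced by `1 − f` and target `1 − m*`)
    (ν0 : ℝ)
    (lam' c' : ℕ → Ω → ℝ)
    (hlam'_meas : ∀ t, 1 ≤ t → t ≤ N → StronglyMeasurable[filt I (t - 1)] (lam' t))
    (hc'_meas : ∀ t, 1 ≤ t → t ≤ N → StronglyMeasurable[filt I (t - 1)] (c' t))
    (hc' : ∀ t, 1 ≤ t → t ≤ N → ∀ᵐ ω ∂μ,
      0 < muhatP ν0 π (fun i => 1 - f i) q I (t - 1) ω ∧
        muhatP ν0 π (fun i => 1 - f i) q I (t - 1) ω ≤ c' t ω)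
    (hlam' : ∀ t, 1 ≤ t → t ≤ N → ∀ᵐ ω ∂μ, 0 ≤ lam' t ω ∧ lam' t ω < 1 / c' t ω) :
    ((∀ ω, ebM μ0 π f q I lam c mstar 0 ω = 1) ∧
     (∀ t ω, 0 ≤ ebM μ0 π f q I lam c mstar t ω) ∧
     (∀ t, t ≤ N → StronglyMeasurable[filt I t] (ebM μ0 π f q I lam c mstar t)) ∧
     (∀ t, 1 ≤ t → t ≤ N →
       μ[ebM μ0 π f q I lam c mstar t | filt I (t - 1)]
         ≤ᵐ[μ] ebM μ0 π f q I lam c mstar (t - 1))) ∧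
    ((∀ ω, ebM ν0 π (fun i => 1 - f i) q I lam' c' (1 - mstar) 0 ω = 1) ∧
     (∀ t ω, 0 ≤ ebM ν0 π (fun i => 1 - f i) q I lam' c' (1 - mstar) t ω) ∧
     (∀ t, t ≤ N →
       StronglyMeasurable[filt I t] (ebM ν0 π (fun i => 1 - f i) q I lam' c' (1 - mstar) t)) ∧
     (∀ t, 1 ≤ t → t ≤ N →
       μ[ebM ν0 π (fun i => 1 - f i) q I lam' c' (1 - mstar) t | filt I (t - 1)]
         ≤ᵐ[μ] ebM ν0 π (fun i => 1 - f i) q I lam' c' (1 - mstar) (t - 1))) := by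
  have hπ0 : ∀ i, 0 ≤ π i := fun i => (hπ i).1.le
  have hmirror : 1 - mstar = ∑ i, π i * (1 - f i) := by
    simp only [mul_sub, mul_one, sum_sub_distrib, hπsum, hmstar]
  refine ⟨⟨fun ω => by simp [ebM], fun t ω => (Real.exp_pos _).le,
      fun t ht => (measurable_ebM hq_meas hlam_meas hc_meas ht).stronglyMeasurable,
      fun t => condExp_ebM_le μ hπ0 (fun i => (hf i).1) hmstar hq_meas hq_pos hq_sum hWoR hcond
        hlam_meas hc_meas hc hlam⟩,
    ⟨fun ω => by simp [ebM], fun t ω => (Real.exp_pos _).le,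
      fun t ht => (measurable_ebM hq_meas hlam'_meas hc'_meas ht).stronglyMeasurable,
      fun t => condExp_ebM_le μ hπ0 (fun i => sub_nonneg.2 (hf i).2) hmirror hq_meas hq_pos
        hq_sum hWoR hcond hlam'_meas hc'_meas hc' hlam'⟩⟩

/-- **Proposition C.2.** With `ψ_E^c(λ) = (−log(1−cλ)−cλ)/c²`, running mean
`μ̂_t` (with `μ̂_0` a fixed positive constant), and predictable `(λ_t), (c_t)` with
`c_t ≥ μ̂_{t−1} > 0` and `λ_t ∈ [0, 1/c_t)`, the empirical-Bernstein process
`M_t^{EB}(m*) = exp(Σ_{i=1}^t λ_i(Z_i − μ_i(m*)) − (Z_i − μ̂_{i−1})² ψ_E^{c_i}(λ_i))` is a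
nonnegative supermartingale; moreover the mirrored process `M'_t^{EB}(m*)`, defined
identically but with `f` replaced by `1 − f` (so `Z̃_t = (π(I_t)/q_t(I_t))(1 − f(I_t))`, the
target `1 − m*`, and the analogous running mean `μ̃_{t-1}`, with its own predictable
sequences `(λ'_t), (c'_t)` satisfying the analogous conditions), is also a nonnegative
supermartingale. -/
theorem statement15
    [m0 : MeasurableSpace Ω] (μ : Measure Ω) [IsProbabilityMeasure μ]
    {N : ℕ} (hN : 1 ≤ N)
    (π f : Fin N → ℝ)
    (hπ : ∀ i, π i ∈ Set.Ioc (0 : ℝ) 1) (hπsum : ∑ i, π i = 1)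
    (hf : ∀ i, f i ∈ Set.Icc (0 : ℝ) 1)
    (I : ℕ → Ω → Fin N) (hI : ∀ t, Measurable (I t))
    (q : ℕ → Ω → Fin N → ℝ)
    (hq_meas : ∀ t, 1 ≤ t → t ≤ N → ∀ i,
      StronglyMeasurable[filt I (t - 1)] fun ω => q t ω i)
    (hq_pos : ∀ t ω, 1 ≤ t → t ≤ N → ∀ i ∈ remaining I t ω, 0 < q t ω i)
    (hq_sum : ∀ t ω, 1 ≤ t → t ≤ N → ∑ i ∈ remaining I t ω, q t ω i = 1)
    (hWoR : ∀ t ω, 1 ≤ t → t ≤ N → I t ω ∈ remaining I t ω)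
    (hcond : ∀ t, 1 ≤ t → t ≤ N → ∀ G : Ω → Fin N → ℝ,
      (∀ i, StronglyMeasurable[filt I (t - 1)] fun ω => G ω i) →
      μ[(fun ω => G ω (I t ω)) | filt I (t - 1)]
        =ᵐ[μ] fun ω => ∑ i ∈ remaining I t ω, q t ω i * G ω i)
    (mstar : ℝ) (hmstar : mstar = ∑ i, π i * f i)
    -- the lower process
    (μ0 : ℝ) (hμ0 : 0 < μ0)
    (lam c : ℕ → Ω → ℝ)
    (hlam_meas : ∀ t, 1 ≤ t → t ≤ N → StronglyMeasurable[filt I (t - 1)] (lam t))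
    (hc_meas : ∀ t, 1 ≤ t → t ≤ N → StronglyMeasurable[filt I (t - 1)] (c t))
    (hc : ∀ t, 1 ≤ t → t ≤ N → ∀ᵐ ω ∂μ,
      0 < muhatP μ0 π f q I (t - 1) ω ∧ muhatP μ0 π f q I (t - 1) ω ≤ c t ω)
    (hlam : ∀ t, 1 ≤ t → t ≤ N → ∀ᵐ ω ∂μ, 0 ≤ lam t ω ∧ lam t ω < 1 / c t ω)
    -- the mirrored process (with `f` replaced by `1 − f` and target `1 − m*`)
    (ν0 : ℝ) (hν0 : 0 < ν0)
    (lam' c' : ℕ → Ω → ℝ)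
    (hlam'_meas : ∀ t, 1 ≤ t → t ≤ N → StronglyMeasurable[filt I (t - 1)] (lam' t))
    (hc'_meas : ∀ t, 1 ≤ t → t ≤ N → StronglyMeasurable[filt I (t - 1)] (c' t))
    (hc' : ∀ t, 1 ≤ t → t ≤ N → ∀ᵐ ω ∂μ,
      0 < muhatP ν0 π (fun i => 1 - f i) q I (t - 1) ω ∧
        muhatP ν0 π (fun i => 1 - f i) q I (t - 1) ω ≤ c' t ω)
    (hlam' : ∀ t, 1 ≤ t → t ≤ N → ∀ᵐ ω ∂μ, 0 ≤ lam' t ω ∧ lam' t ω < 1 / c' t ω) :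
    ((∀ ω, ebM μ0 π f q I lam c mstar 0 ω = 1) ∧
     (∀ t ω, 0 ≤ ebM μ0 π f q I lam c mstar t ω) ∧
     (∀ t, t ≤ N → StronglyMeasurable[filt I t] (ebM μ0 π f q I lam c mstar t)) ∧
     (∀ t, 1 ≤ t → t ≤ N →
       μ[ebM μ0 π f q I lam c mstar t | filt I (t - 1)]
         ≤ᵐ[μ] ebM μ0 π f q I lam c mstar (t - 1))) ∧
    ((∀ ω, ebM ν0 π (fun i => 1 - f i) q I lam' c' (1 - mstar) 0 ω = 1) ∧
     (∀ t ω, 0 ≤ ebM ν0 π (fun i => 1 - f i) q I lam' c' (1 - mstar) t ω) ∧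
     (∀ t, t ≤ N →
       StronglyMeasurable[filt I t] (ebM ν0 π (fun i => 1 - f i) q I lam' c' (1 - mstar) t)) ∧
     (∀ t, 1 ≤ t → t ≤ N →
       μ[ebM ν0 π (fun i => 1 - f i) q I lam' c' (1 - mstar) t | filt I (t - 1)]
         ≤ᵐ[μ] ebM ν0 π (fun i => 1 - f i) q I lam' c' (1 - mstar) (t - 1))) :=
  statement15_general (m0 := m0) μ π f hπ hπsum hf I q hq_meas hq_pos hq_sum hWoR hcond mstar hmstar
    μ0 lam c hlam_meas hc_meas hc hlam ν0 lam' c' hlam'_meas hc'_meas hc' hlam'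

end RLFA
end

section
/- (Appendix D: recovery of the Waudby-Smith–Ramdas Hoeffding CS.) Let N ≥ 1, let X_1,…,X_t be real numbers with t ≤ N, and let λ_1,…,λ_t be positive reals; set λ'_i = λ_i · N/(N − i + 1) for i = 1,…,t. Then the weighted estimator with uniform weights π(i) = 1/N and uniform without-replacement sampling probabilities q_i(j) = 1/(N − i + 1), namely μ̂_t(λ'_1^t) = [Σ_{i=1}^t λ'_i (((N − i + 1)/N) X_i + (1/N) Σ_{j=1}^{i−1} X_j)] / (Σ_{i=1}^t λ'_i), equals the Waudby-Smith–Ramdas estimator μ̂_t^{WSR}(λ_1^t) = [Σ_{i=1}^t λ_i (X_i + (1/(N − i + 1)) Σ_{j=1}^{i−1} X_j)] / (Σ_{i=1}^t λ_i · N/(N − i + 1)); moreover, taking c_i = (N − i + 1)/N, the corresponding Hoeffding confidence radii agree: (log(2/α) + Σ_{i=1}^t λ'_i² c_i²/8)/(Σ_{i=1}^t λ'_i) = (log(2/α) + Σ_{i=1}^t λ_i²/8)/(Σ_{i=1}^t λ_i · N/(N − i + 1)). -/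
/-! Since `λ'_i · c_i = λ_i`, the two estimators and the two radii agree summand by summand,
and their denominators are the same sum `∑ λ'_i`. -/

open Finset

namespace RLFA

section Rescaling

variable {K : Type*} [Field K] {n d : K}

theorem mul_div_mul_add_eq (hn : n ≠ 0) (hd : d ≠ 0) (l x s : K) :
    l * n / d * (d / n * x + 1 / n * s) = l * (x + 1 / d * s) := by
  field_simp

theorem mul_div_sq_mul_div_sq (hn : n ≠ 0) (hd : d ≠ 0) (l : K) :
    (l * n / d) ^ 2 * (d / n) ^ 2 = l ^ 2 := by
  field_simp

end Rescaling

theorem remaining_ne_zero {N i : ℕ} (hiN : i ≤ N) : (N : ℝ) - i + 1 ≠ 0 := by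
  have : (i : ℝ) ≤ N := by exact_mod_cast hiN
  linarith

theorem statement19_general
    (N t : ℕ) (htN : t ≤ N)
    (X lam : ℕ → ℝ)
    (α : ℝ)
    (lam' : ℕ → ℝ) (hlam' : ∀ i, lam' i = lam i * N / ((N : ℝ) - i + 1))
    (c : ℕ → ℝ) (hc : ∀ i, c i = ((N : ℝ) - i + 1) / N) :
    (∑ i ∈ Finset.Icc 1 t, lam' i *
        ((((N : ℝ) - i + 1) / N) * X i + (1 / N) * ∑ j ∈ Finset.Icc 1 (i - 1), X j)) /
      (∑ i ∈ Finset.Icc 1 t, lam' i)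
      = (∑ i ∈ Finset.Icc 1 t, lam i *
          (X i + (1 / ((N : ℝ) - i + 1)) * ∑ j ∈ Finset.Icc 1 (i - 1), X j)) /
        (∑ i ∈ Finset.Icc 1 t, lam i * N / ((N : ℝ) - i + 1)) ∧
    (Real.log (2 / α) + ∑ i ∈ Finset.Icc 1 t, (lam' i) ^ 2 * (c i) ^ 2 / 8) /
      (∑ i ∈ Finset.Icc 1 t, lam' i)
      = (Real.log (2 / α) + ∑ i ∈ Finset.Icc 1 t, (lam i) ^ 2 / 8) /
        (∑ i ∈ Finset.Icc 1 t, lam i * N / ((N : ℝ) - i + 1)) := by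
  have hne : ∀ i ∈ Finset.Icc 1 t, (N : ℝ) ≠ 0 ∧ (N : ℝ) - i + 1 ≠ 0 := fun i hi => by
    obtain ⟨h1i, hit⟩ := Finset.mem_Icc.mp hi
    exact ⟨by exact_mod_cast (by omega : N ≠ 0), remaining_ne_zero (hit.trans htN)⟩
  have hden : ∑ i ∈ Finset.Icc 1 t, lam' i
      = ∑ i ∈ Finset.Icc 1 t, lam i * N / ((N : ℝ) - i + 1) :=
    Finset.sum_congr rfl fun i _ => hlam' i
  rw [hden]
  refine ⟨congrArg (· / _) (Finset.sum_congr rfl fun i hi => ?_),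
    congrArg (fun s => (_ + s) / _) (Finset.sum_congr rfl fun i hi => ?_)⟩
  · rw [hlam', mul_div_mul_add_eq (hne i hi).1 (hne i hi).2]
  · rw [hlam', hc, mul_div_sq_mul_div_sq (hne i hi).1 (hne i hi).2]

/-- **Appendix D: recovery of the Waudby-Smith–Ramdas Hoeffding CS.**
Let `N ≥ 1`, let `X_1,…,X_t` be real numbers with `t ≤ N`, and let `λ_1,…,λ_t` be positive
reals; set `λ'_i = λ_i · N/(N − i + 1)` for `i = 1,…,t`. Then the weighted estimator with
uniform weights `π(i) = 1/N` and uniform without-replacement sampling probabilities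
`q_i(j) = 1/(N − i + 1)` equals the Waudby-Smith–Ramdas estimator; moreover, taking
`c_i = (N − i + 1)/N`, the corresponding Hoeffding confidence radii agree. -/
theorem statement19
    (N t : ℕ) (hN : 1 ≤ N) (ht1 : 1 ≤ t) (htN : t ≤ N)
    (X lam : ℕ → ℝ) (hlam_pos : ∀ i ∈ Finset.Icc 1 t, 0 < lam i)
    (α : ℝ) (hα : α ∈ Set.Ioo (0 : ℝ) 1)
    (lam' : ℕ → ℝ) (hlam' : ∀ i, lam' i = lam i * N / ((N : ℝ) - i + 1))
    (c : ℕ → ℝ) (hc : ∀ i, c i = ((N : ℝ) - i + 1) / N) :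
    (∑ i ∈ Finset.Icc 1 t, lam' i *
        ((((N : ℝ) - i + 1) / N) * X i + (1 / N) * ∑ j ∈ Finset.Icc 1 (i - 1), X j)) /
      (∑ i ∈ Finset.Icc 1 t, lam' i)
      = (∑ i ∈ Finset.Icc 1 t, lam i *
          (X i + (1 / ((N : ℝ) - i + 1)) * ∑ j ∈ Finset.Icc 1 (i - 1), X j)) /
        (∑ i ∈ Finset.Icc 1 t, lam i * N / ((N : ℝ) - i + 1)) ∧
    (Real.log (2 / α) + ∑ i ∈ Finset.Icc 1 t, (lam' i) ^ 2 * (c i) ^ 2 / 8) /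
      (∑ i ∈ Finset.Icc 1 t, lam' i)
      = (Real.log (2 / α) + ∑ i ∈ Finset.Icc 1 t, (lam i) ^ 2 / 8) /
        (∑ i ∈ Finset.Icc 1 t, lam i * N / ((N : ℝ) - i + 1)) :=
  statement19_general N t htN X lam α lam' hlam' c hc

end RLFA
end
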